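/- arXiv:2510.12521 — 5 statements merged into one kernel-verified Lean document; each statement's English description precedes it below -/
import Mathlib

section
/- Let (Ω,𝓕,ℙ) be a probability space, let x† be a square-integrable random vector in ℝⁿ with mean μ and covariance Σ_x, and let ε be a square-integrable random vector in ℝᵐ with mean 0 and covariance Σ_ε, with x† and ε uncorrelated (𝔼[(x†−μ)εᵀ] = 0). Let A ∈ ℝ^{m×n} and assume AᵀA, Σ_x and Σ_ε are invertible. Then the choice M = AᵀΣ_εA(AᵀA)⁻¹Σ_x⁻¹ together with any x₀ ∈ μ + ker(M) minimizes, over all M ∈ ℝ^{n×n} such that AᵀA+M is invertible and all x₀ ∈ ℝⁿ, the risk 𝔼‖(AᵀA+M)⁻¹(Aᵀ(Ax†+ε) + Mx₀) − x†‖² of the Lavrentiev-regularized reconstruction. -/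
/-!
Write `B = AᵀA`, `C = Aᵀ Σ_ε A` and `W = (B + M)⁻¹`. Since `W B + W M = 1`, the error of the
reconstruction is `(W B - 1)(x† - μ) + W Aᵀ ε + W M (x₀ - μ)`, a centred part plus a constant, so
the risk is `tr((W B - 1) Σ_x (W B - 1)ᵀ) + tr(W C Wᵀ) + ‖W M (x₀ - μ)‖²`. The two trace terms
form a convex quadratic in `W` with Hessian `C + B Σ_x B`; completing the square shows that it is
minimal exactly where `W (C + B Σ_x B) = Σ_x B`. For `M = C B⁻¹ Σ_x⁻¹` one has
`(B + M) Σ_x B = C + B Σ_x B`, so `(B + M)⁻¹` is such a minimizer, and `x₀ ∈ μ + ker M` makes the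
last term vanish.
-/

open MeasureTheory Matrix

section SecondMoments

variable {Ω κ ι : Type*} [MeasurableSpace Ω] {P : Measure Ω} [Fintype κ] [Fintype ι]
  {z : Ω → κ → ℝ} {S : Matrix κ κ ℝ}

lemma integrable_dotProduct_mul_dotProduct (hz : ∀ k, MemLp (fun ω => z ω k) 2 P)
    (a b : κ → ℝ) : Integrable (fun ω => (a ⬝ᵥ z ω) * (b ⬝ᵥ z ω)) P :=
  (memLp_finsetSum _ fun k _ => (hz k).const_mul (a k)).integrable_mul
    (memLp_finsetSum _ fun k _ => (hz k).const_mul (b k))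

lemma integral_dotProduct_mul_dotProduct (hz : ∀ k, MemLp (fun ω => z ω k) 2 P)
    (hS : ∀ k l, ∫ ω, z ω k * z ω l ∂P = S k l) (a b : κ → ℝ) :
    ∫ ω, (a ⬝ᵥ z ω) * (b ⬝ᵥ z ω) ∂P = a ⬝ᵥ S *ᵥ b := by
  have hint : ∀ k l, Integrable (fun ω => a k * b l * (z ω k * z ω l)) P := fun k l =>
    ((hz k).integrable_mul (hz l)).const_mul _
  have hexpand : ∀ ω, (a ⬝ᵥ z ω) * (b ⬝ᵥ z ω) = ∑ k, ∑ l, a k * b l * (z ω k * z ω l) := by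
    intro ω
    simp only [dotProduct, Finset.sum_mul_sum]
    exact Finset.sum_congr rfl fun k _ => Finset.sum_congr rfl fun l _ => by ring
  simp only [hexpand]
  rw [integral_finsetSum _ fun k _ => integrable_finsetSum _ fun l _ => hint k l]
  simp only [dotProduct, mulVec, Finset.mul_sum]
  refine Finset.sum_congr rfl fun k _ => ?_
  rw [integral_finsetSum _ fun l _ => hint k l]
  refine Finset.sum_congr rfl fun l _ => ?_
  rw [integral_const_mul, hS]
  ring

lemma integral_sum_sq_mulVec (hz : ∀ k, MemLp (fun ω => z ω k) 2 P)
    (hS : ∀ k l, ∫ ω, z ω k * z ω l ∂P = S k l) (G : Matrix ι κ ℝ) :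
    ∫ ω, ∑ i, (G *ᵥ z ω) i ^ 2 ∂P = trace (G * S * Gᵀ) := by
  have hrow : ∀ ω i, (G *ᵥ z ω) i ^ 2 = (G i ⬝ᵥ z ω) * (G i ⬝ᵥ z ω) := fun _ _ => sq _
  simp only [hrow]
  rw [integral_finsetSum _ fun i _ => integrable_dotProduct_mul_dotProduct hz (G i) (G i)]
  refine Finset.sum_congr rfl fun i _ => ?_
  rw [integral_dotProduct_mul_dotProduct hz hS, Matrix.mul_assoc, diag_apply, mul_apply]
  simp only [dotProduct, mulVec, mul_apply, transpose_apply, Finset.mul_sum]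

lemma posSemidef_of_integral_mul_eq (hz : ∀ k, MemLp (fun ω => z ω k) 2 P)
    (hS : ∀ k l, ∫ ω, z ω k * z ω l ∂P = S k l) : S.PosSemidef := by
  refine .of_dotProduct_mulVec_nonneg ?_ fun v => ?_
  · rw [isHermitian_iff_isSymm]
    ext k l
    rw [transpose_apply, ← hS, ← hS]
    simp only [mul_comm]
  · rw [star_trivial, ← integral_dotProduct_mul_dotProduct hz hS]
    exact integral_nonneg fun ω => mul_self_nonneg _

lemma integral_sumElim_mul_sumElim {κ₁ κ₂ : Type*} {z₁ : Ω → κ₁ → ℝ} {z₂ : Ω → κ₂ → ℝ}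
    {S₁ : Matrix κ₁ κ₁ ℝ} {S₂ : Matrix κ₂ κ₂ ℝ}
    (h₁ : ∀ k l, ∫ ω, z₁ ω k * z₁ ω l ∂P = S₁ k l)
    (h₂ : ∀ k l, ∫ ω, z₂ ω k * z₂ ω l ∂P = S₂ k l)
    (h₁₂ : ∀ k l, ∫ ω, z₁ ω k * z₂ ω l ∂P = 0) (k l : κ₁ ⊕ κ₂) :
    ∫ ω, Sum.elim (z₁ ω) (z₂ ω) k * Sum.elim (z₁ ω) (z₂ ω) l ∂P = fromBlocks S₁ 0 0 S₂ k l := by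
  rcases k with k | k <;> rcases l with l | l
  · exact h₁ k l
  · exact h₁₂ k l
  · exact (integral_congr_ae (.of_forall fun ω => mul_comm _ _)).trans (h₁₂ l k)
  · exact h₂ k l

end SecondMoments

lemma fromCols_mul_fromBlocks_mul_transpose {ι κ₁ κ₂ : Type*} [Fintype κ₁] [Fintype κ₂]
    (A₁ : Matrix ι κ₁ ℝ) (A₂ : Matrix ι κ₂ ℝ) (S₁ : Matrix κ₁ κ₁ ℝ) (S₂ : Matrix κ₂ κ₂ ℝ) :
    fromCols A₁ A₂ * fromBlocks S₁ 0 0 S₂ * (fromCols A₁ A₂)ᵀ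
      = A₁ * S₁ * A₁ᵀ + A₂ * S₂ * A₂ᵀ := by
  simp [fromCols_mul_fromBlocks, transpose_fromCols, fromCols_mul_fromRows]

lemma lavrentiev_error_eq {ι κ : Type*} [Fintype ι] [DecidableEq ι] [Fintype κ]
    (A : Matrix κ ι ℝ) {M W : Matrix ι ι ℝ} (hW : W * (Aᵀ * A + M) = 1) (x μ x₀ : ι → ℝ)
    (e : κ → ℝ) :
    W *ᵥ (Aᵀ *ᵥ (A *ᵥ x + e) + M *ᵥ x₀) - x
      = (W * (Aᵀ * A) - 1) *ᵥ (x - μ) + (W * Aᵀ) *ᵥ e + (W * M) *ᵥ (x₀ - μ) := by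
  have hμ : (W * (Aᵀ * A)) *ᵥ μ + (W * M) *ᵥ μ = μ := by
    rw [← add_mulVec, ← Matrix.mul_add, hW, one_mulVec]
  simp only [mulVec_add, mulVec_sub, sub_mulVec, one_mulVec, mulVec_mulVec]
  linear_combination (norm := module) hμ

lemma lavrentiev_risk_eq {Ω ι κ : Type*} [MeasurableSpace Ω] {P : Measure Ω}
    [IsProbabilityMeasure P] [Fintype ι] [DecidableEq ι] [Fintype κ]
    {x : Ω → ι → ℝ} {ε : Ω → κ → ℝ} (hx : MemLp x 2 P) (hε : MemLp ε 2 P)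
    {μ : ι → ℝ} (hμ : ∫ ω, x ω ∂P = μ) {Sx : Matrix ι ι ℝ}
    (hSx : ∀ i j, ∫ ω, (x ω i - μ i) * (x ω j - μ j) ∂P = Sx i j)
    (hεmean : ∫ ω, ε ω ∂P = 0) {Se : Matrix κ κ ℝ}
    (hSe : ∀ i j, ∫ ω, ε ω i * ε ω j ∂P = Se i j)
    (huncorr : ∀ i j, ∫ ω, (x ω i - μ i) * ε ω j ∂P = 0)
    (A : Matrix κ ι ℝ) {M W : Matrix ι ι ℝ} (hW : W * (Aᵀ * A + M) = 1) (x₀ : ι → ℝ) :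
    ∫ ω, ∑ i, (W *ᵥ (Aᵀ *ᵥ (A *ᵥ x ω + ε ω) + M *ᵥ x₀) - x ω) i ^ 2 ∂P
      = trace ((W * (Aᵀ * A) - 1) * Sx * (W * (Aᵀ * A) - 1)ᵀ)
        + trace (W * (Aᵀ * Se * A) * Wᵀ) + (W * M) *ᵥ (x₀ - μ) ⬝ᵥ (W * M) *ᵥ (x₀ - μ) := by
  have hxc : ∀ i, MemLp (fun ω => x ω i - μ i) 2 P := fun i => (hx.eval i).sub (memLp_const _)
  have hxc_mean : ∀ i, ∫ ω, (x ω i - μ i) ∂P = 0 := fun i => by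
    rw [integral_sub ((hx.eval i).integrable one_le_two) (integrable_const _),
      ← eval_integral fun i => (hx.eval i).integrable one_le_two, hμ]
    simp
  have hε_mean : ∀ k, ∫ ω, ε ω k ∂P = 0 := fun k => by
    rw [← eval_integral fun k => (hε.eval k).integrable one_le_two, hεmean, Pi.zero_apply]
  -- The constant coordinate `1` turns the offset `W M (x₀ - μ)` into one more column of the
  -- coefficient matrix, so the whole risk is a single second moment.
  let z : Ω → (ι ⊕ κ) ⊕ Unit → ℝ := fun ω => Sum.elim (Sum.elim (x ω - μ) (ε ω)) 1
  have hz : ∀ k, MemLp (fun ω => z ω k) 2 P := by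
    rintro ((i | k) | u)
    · exact hxc i
    · exact hε.eval k
    · exact memLp_const 1
  have hS := integral_sumElim_mul_sumElim (integral_sumElim_mul_sumElim hSx hSe huncorr)
    (z₂ := fun _ => 1) (S₂ := (1 : Matrix Unit Unit ℝ)) (fun _ _ => by simp)
    (by rintro (i | k) u <;> simp [hxc_mean, hε_mean])
  have herr : ∀ ω, W *ᵥ (Aᵀ *ᵥ (A *ᵥ x ω + ε ω) + M *ᵥ x₀) - x ω
      = fromCols (fromCols (W * (Aᵀ * A) - 1) (W * Aᵀ))
          (replicateCol Unit ((W * M) *ᵥ (x₀ - μ))) *ᵥ z ω := by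
    intro ω
    rw [lavrentiev_error_eq A hW (x ω) μ x₀ (ε ω), fromCols_mulVec_sumElim,
      fromCols_mulVec_sumElim]
    congr 1
    ext i
    simp [mulVec, dotProduct]
  simp only [herr]
  rw [integral_sum_sq_mulVec hz hS, fromCols_mul_fromBlocks_mul_transpose,
    fromCols_mul_fromBlocks_mul_transpose, trace_add, trace_add, Matrix.mul_one,
    transpose_replicateCol, trace_replicateCol_mul_replicateRow, transpose_mul,
    transpose_transpose]
  simp only [Matrix.mul_assoc]

section Minimization

variable {ι : Type*} [Fintype ι]

lemma trace_conj_sub_eq {T W₀ : Matrix ι ι ℝ} (hT : T.IsSymm) (W : Matrix ι ι ℝ) :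
    trace ((W - W₀) * T * (W - W₀)ᵀ)
      = trace (W * T * Wᵀ) - 2 * trace (W * (T * W₀ᵀ)) + trace (W₀ * (T * W₀ᵀ)) := by
  have hcross : trace (W₀ * T * Wᵀ) = trace (W * (T * W₀ᵀ)) := by
    rw [← trace_transpose, transpose_mul, transpose_mul, transpose_transpose, hT.eq]
  have hexpand : (W - W₀) * T * (W - W₀)ᵀ
      = W * T * Wᵀ - W * (T * W₀ᵀ) - W₀ * T * Wᵀ + W₀ * (T * W₀ᵀ) := by
    rw [transpose_sub]
    noncomm_ring
  rw [hexpand, trace_add, trace_sub, trace_sub, hcross]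
  ring

variable [DecidableEq ι]

lemma trace_bias_add_trace_variance_eq {B S : Matrix ι ι ℝ} (hB : B.IsSymm) (hS : S.IsSymm)
    (C V : Matrix ι ι ℝ) :
    trace ((V * B - 1) * S * (V * B - 1)ᵀ) + trace (V * C * Vᵀ)
      = trace (V * (C + B * S * B) * Vᵀ) - 2 * trace (V * (B * S)) + trace S := by
  have hcross : trace (S * B * Vᵀ) = trace (V * (B * S)) := by
    rw [← trace_transpose, transpose_mul, transpose_mul, transpose_transpose, hB.eq, hS.eq]
  have hexpand : (V * B - 1) * S * (V * B - 1)ᵀ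
      = V * (B * S * B) * Vᵀ - V * (B * S) - S * B * Vᵀ + S := by
    rw [transpose_sub, transpose_mul, hB.eq, transpose_one]
    noncomm_ring
  rw [hexpand, Matrix.mul_add, Matrix.add_mul, trace_add, trace_add, trace_sub, trace_sub,
    hcross]
  ring

lemma trace_bias_add_trace_variance_le {B S C W₀ : Matrix ι ι ℝ} (hB : B.IsSymm)
    (hS : S.IsSymm) (hT : (C + B * S * B).PosSemidef) (hW₀ : W₀ * (C + B * S * B) = S * B)
    (W : Matrix ι ι ℝ) :
    trace ((W₀ * B - 1) * S * (W₀ * B - 1)ᵀ) + trace (W₀ * C * W₀ᵀ)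
      ≤ trace ((W * B - 1) * S * (W * B - 1)ᵀ) + trace (W * C * Wᵀ) := by
  have hTsymm : (C + B * S * B).IsSymm := isHermitian_iff_isSymm.mp hT.isHermitian
  have hTW₀ : (C + B * S * B) * W₀ᵀ = B * S := by
    rw [← hTsymm.eq, ← transpose_mul, hW₀, transpose_mul, hB.eq, hS.eq]
  have hnonneg : 0 ≤ trace ((W - W₀) * (C + B * S * B) * (W - W₀)ᵀ) := by
    simpa [conjTranspose_eq_transpose_of_trivial] using
      (hT.mul_mul_conjTranspose_same (W - W₀)).trace_nonneg
  rw [trace_conj_sub_eq hTsymm, hTW₀] at hnonneg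
  rw [trace_bias_add_trace_variance_eq hB hS, trace_bias_add_trace_variance_eq hB hS,
    Matrix.mul_assoc W₀, hTW₀]
  linarith

lemma add_optimalRegularizer_mul {B S : Matrix ι ι ℝ} (hB : IsUnit B) (hS : IsUnit S)
    (C : Matrix ι ι ℝ) :
    (B + C * B⁻¹ * S⁻¹) * (S * B) = C + B * S * B := by
  rw [Matrix.add_mul, Matrix.mul_assoc, Matrix.mul_assoc, ← Matrix.mul_assoc S⁻¹,
    nonsing_inv_mul _ ((isUnit_iff_isUnit_det _).mp hS), Matrix.one_mul,
    nonsing_inv_mul _ ((isUnit_iff_isUnit_det _).mp hB), Matrix.mul_one, Matrix.mul_assoc,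
    add_comm]

lemma isUnit_add_optimalRegularizer {B S C : Matrix ι ι ℝ} (hB : IsUnit B) (hS : IsUnit S)
    (hT : (C + B * S * B).PosDef) : IsUnit (B + C * B⁻¹ * S⁻¹) := by
  have h := hT.isUnit
  rw [← add_optimalRegularizer_mul hB hS] at h
  exact isUnit_of_mul_isUnit_left h

lemma posDef_transpose_mul_mul_add {κ : Type*} [Fintype κ] {A : Matrix κ ι ℝ}
    {Se : Matrix κ κ ℝ} {Sx : Matrix ι ι ℝ} (hSe : Se.PosSemidef) (hSx : Sx.PosDef)
    (hA : IsUnit (Aᵀ * A)) : (Aᵀ * Se * A + Aᵀ * A * Sx * (Aᵀ * A)).PosDef := by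
  have hC := hSe.conjTranspose_mul_mul_same A
  have hBSB := hSx.conjTranspose_mul_mul_same (mulVec_injective_of_isUnit hA)
  rw [conjTranspose_eq_transpose_of_trivial] at hC hBSB
  rw [transpose_mul, transpose_transpose] at hBSB
  exact .posSemidef_add hC hBSB

end Minimization

theorem optimal_lavrentiev_general {Ωs : Type*} [MeasurableSpace Ωs]
    (P : Measure Ωs) [IsProbabilityMeasure P] {n m : ℕ}
    (x : Ωs → Fin n → ℝ) (ε : Ωs → Fin m → ℝ)
    (hx : MemLp x 2 P) (hε : MemLp ε 2 P)
    (μx : Fin n → ℝ) (hμx : ∫ ω, x ω ∂P = μx)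
    (Sx : Matrix (Fin n) (Fin n) ℝ)
    (hSx : ∀ i j, ∫ ω, (x ω i - μx i) * (x ω j - μx j) ∂P = Sx i j)
    (hεmean : ∫ ω, ε ω ∂P = 0)
    (Se : Matrix (Fin m) (Fin m) ℝ)
    (hSe : ∀ i j, ∫ ω, ε ω i * ε ω j ∂P = Se i j)
    (huncorr : ∀ i j, ∫ ω, (x ω i - μx i) * ε ω j ∂P = 0)
    (A : Matrix (Fin m) (Fin n) ℝ)
    (hATA : IsUnit (Aᵀ * A)) (hSxinv : IsUnit Sx) :
    ∀ x₀ : Fin n → ℝ,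
      (Aᵀ * Se * A * (Aᵀ * A)⁻¹ * Sx⁻¹).mulVec (x₀ - μx) = 0 →
      ∀ (M : Matrix (Fin n) (Fin n) ℝ) (x₀' : Fin n → ℝ), IsUnit (Aᵀ * A + M) →
        ∫ ω, ∑ i, (((Aᵀ * A + Aᵀ * Se * A * (Aᵀ * A)⁻¹ * Sx⁻¹)⁻¹).mulVec
            (Aᵀ.mulVec (A.mulVec (x ω) + ε ω) +
              (Aᵀ * Se * A * (Aᵀ * A)⁻¹ * Sx⁻¹).mulVec x₀) - x ω) i ^ 2 ∂P ≤
        ∫ ω, ∑ i, (((Aᵀ * A + M)⁻¹).mulVec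
            (Aᵀ.mulVec (A.mulVec (x ω) + ε ω) + M.mulVec x₀') - x ω) i ^ 2 ∂P := by
  intro x₀ hx₀ M x₀' hM
  set Mopt := Aᵀ * Se * A * (Aᵀ * A)⁻¹ * Sx⁻¹
  have hB : (Aᵀ * A).IsSymm := by rw [IsSymm, transpose_mul, transpose_transpose]
  have hSx_psd : Sx.PosSemidef :=
    posSemidef_of_integral_mul_eq (z := fun ω i => x ω i - μx i)
      (fun i => (hx.eval i).sub (memLp_const _)) hSx
  have hSe_psd : Se.PosSemidef := posSemidef_of_integral_mul_eq hε.eval hSe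
  have hT : (Aᵀ * Se * A + Aᵀ * A * Sx * (Aᵀ * A)).PosDef :=
    posDef_transpose_mul_mul_add hSe_psd (hSx_psd.posDef_iff_isUnit.mpr hSxinv) hATA
  have hopt : (Aᵀ * A + Mopt)⁻¹ * (Aᵀ * A + Mopt) = 1 :=
    nonsing_inv_mul _ ((isUnit_iff_isUnit_det _).mp (isUnit_add_optimalRegularizer hATA hSxinv hT))
  have hWopt : (Aᵀ * A + Mopt)⁻¹ * (Aᵀ * Se * A + Aᵀ * A * Sx * (Aᵀ * A)) = Sx * (Aᵀ * A) := by
    rw [← add_optimalRegularizer_mul hATA hSxinv, ← Matrix.mul_assoc, hopt, Matrix.one_mul]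
  rw [lavrentiev_risk_eq hx hε hμx hSx hεmean hSe huncorr A hopt x₀,
    lavrentiev_risk_eq hx hε hμx hSx hεmean hSe huncorr A
      (nonsing_inv_mul _ ((isUnit_iff_isUnit_det _).mp hM)) x₀',
    ← mulVec_mulVec, hx₀, mulVec_zero, zero_dotProduct, add_zero]
  have hoffset := dotProduct_self_star_nonneg (((Aᵀ * A + M)⁻¹ * M) *ᵥ (x₀' - μx))
  rw [star_trivial] at hoffset
  exact le_add_of_le_of_nonneg (trace_bias_add_trace_variance_le hB
    (isHermitian_iff_isSymm.mp hSx_psd.isHermitian) hT.posSemidef hWopt _) hoffset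

/-- **Optimal Lavrentiev regularization.** With `x†` square-integrable (mean `μx`,
covariance `Sx`), `ε` square-integrable (mean `0`, covariance `Se`), uncorrelated,
and `AᵀA`, `Sx`, `Se` invertible, the choice `M = Aᵀ Se A (AᵀA)⁻¹ Sx⁻¹` together
with any `x₀ ∈ μx + ker M` minimizes the risk
`𝔼‖(AᵀA+M)⁻¹(Aᵀ(Ax†+ε) + M x₀) − x†‖²` over all `M` with `AᵀA+M` invertible
and all `x₀`. -/
theorem optimal_lavrentiev {Ωs : Type*} [MeasurableSpace Ωs]
    (P : Measure Ωs) [IsProbabilityMeasure P] {n m : ℕ}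
    (x : Ωs → Fin n → ℝ) (ε : Ωs → Fin m → ℝ)
    (hx : MemLp x 2 P) (hε : MemLp ε 2 P)
    (μx : Fin n → ℝ) (hμx : ∫ ω, x ω ∂P = μx)
    (Sx : Matrix (Fin n) (Fin n) ℝ)
    (hSx : ∀ i j, ∫ ω, (x ω i - μx i) * (x ω j - μx j) ∂P = Sx i j)
    (hεmean : ∫ ω, ε ω ∂P = 0)
    (Se : Matrix (Fin m) (Fin m) ℝ)
    (hSe : ∀ i j, ∫ ω, ε ω i * ε ω j ∂P = Se i j)
    (huncorr : ∀ i j, ∫ ω, (x ω i - μx i) * ε ω j ∂P = 0)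
    (A : Matrix (Fin m) (Fin n) ℝ)
    (hATA : IsUnit (Aᵀ * A)) (hSxinv : IsUnit Sx) (hSeinv : IsUnit Se) :
    ∀ x₀ : Fin n → ℝ,
      (Aᵀ * Se * A * (Aᵀ * A)⁻¹ * Sx⁻¹).mulVec (x₀ - μx) = 0 →
      ∀ (M : Matrix (Fin n) (Fin n) ℝ) (x₀' : Fin n → ℝ), IsUnit (Aᵀ * A + M) →
        ∫ ω, ∑ i, (((Aᵀ * A + Aᵀ * Se * A * (Aᵀ * A)⁻¹ * Sx⁻¹)⁻¹).mulVec
            (Aᵀ.mulVec (A.mulVec (x ω) + ε ω) +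
              (Aᵀ * Se * A * (Aᵀ * A)⁻¹ * Sx⁻¹).mulVec x₀) - x ω) i ^ 2 ∂P ≤
        ∫ ω, ∑ i, (((Aᵀ * A + M)⁻¹).mulVec
            (Aᵀ.mulVec (A.mulVec (x ω) + ε ω) + M.mulVec x₀') - x ω) i ^ 2 ∂P :=
  optimal_lavrentiev_general P x ε hx hε μx hμx Sx hSx hεmean Se hSe huncorr A hATA hSxinv
end

section
/- Let A ∈ ℝ^{m×n} with AᵀA invertible and let Σ_x ∈ ℝ^{n×n} and Σ_ε ∈ ℝ^{m×m} be symmetric positive definite. Then the matrix AᵀA + AᵀΣ_εA(AᵀA)⁻¹Σ_x⁻¹ is invertible. -/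
/-!
Write `G = AᵀA` and `C = A G⁻¹`. Since `G` is symmetric, `Aᵀ Σ_ε A G⁻¹ = G (Cᵀ Σ_ε C)`, so the
system matrix factors as `G (Σ_x + Cᵀ Σ_ε C) Σ_x⁻¹`. The middle factor is positive definite,
being a positive definite matrix plus a congruence of one, so all three factors are invertible.
-/

open Matrix

namespace Matrix

variable {n R : Type*} [Fintype n] [DecidableEq n] [CommRing R]

theorem transpose_mul_mul_mul_inv_gram {m : Type*} [Fintype m] (A : Matrix m n R)
    (hA : IsUnit (Aᵀ * A)) (S : Matrix m m R) :
    Aᵀ * S * A * (Aᵀ * A)⁻¹ = Aᵀ * A * ((A * (Aᵀ * A)⁻¹)ᵀ * S * (A * (Aᵀ * A)⁻¹)) := by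
  have hdet : IsUnit (Aᵀ * A).det := (isUnit_iff_isUnit_det _).mp hA
  have hsymm : (Aᵀ * A)⁻¹ᵀ = (Aᵀ * A)⁻¹ := by
    rw [transpose_nonsing_inv, transpose_mul, transpose_transpose]
  -- keeps `simp` from reassociating `Aᵀ * A` itself
  set G := Aᵀ * A
  rw [transpose_mul, hsymm]
  simp only [Matrix.mul_assoc, mul_nonsing_inv_cancel_left _ _ hdet]

theorem isUnit_add_mul_mul_inv {G S P : Matrix n n R} (hG : IsUnit G) (hS : IsUnit S)
    (hSP : IsUnit (S + P)) : IsUnit (G + G * P * S⁻¹) := by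
  have hdet : IsUnit S.det := (isUnit_iff_isUnit_det _).mp hS
  have hfactor : G + G * P * S⁻¹ = G * (S + P) * S⁻¹ := by
    rw [Matrix.mul_add, Matrix.add_mul, mul_nonsing_inv_cancel_right _ _ hdet]
  rw [hfactor]
  exact (hG.mul hSP).mul (isUnit_nonsing_inv_iff.mpr hS)

end Matrix

/-- If `AᵀA` is invertible and `Sx`, `Se` are symmetric positive definite, then
the system matrix `AᵀA + Aᵀ Se A (AᵀA)⁻¹ Sx⁻¹` of the optimal
Lavrentiev-regularized reconstruction is invertible. -/
theorem optimal_lavrentiev_system_matrix_invertible {m n : ℕ}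
    (A : Matrix (Fin m) (Fin n) ℝ) (hATA : IsUnit (Aᵀ * A))
    (Sx : Matrix (Fin n) (Fin n) ℝ) (hSx : Sx.PosDef)
    (Se : Matrix (Fin m) (Fin m) ℝ) (hSe : Se.PosDef) :
    IsUnit (Aᵀ * A + Aᵀ * Se * A * (Aᵀ * A)⁻¹ * Sx⁻¹) := by
  have hcongr : ((A * (Aᵀ * A)⁻¹)ᵀ * Se * (A * (Aᵀ * A)⁻¹)).PosSemidef := by
    simpa using hSe.posSemidef.conjTranspose_mul_mul_same (A * (Aᵀ * A)⁻¹)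
  rw [transpose_mul_mul_mul_inv_gram A hATA Se]
  exact isUnit_add_mul_mul_inv hATA hSx.isUnit (hSx.add_posSemidef hcongr).isUnit
end

section
/- Let (Ω,𝓕,ℙ) be a probability space, let x† be a square-integrable random vector in ℝⁿ with mean μ and covariance Σ_x, and let ε be a square-integrable random vector in ℝᵐ with mean 0 and covariance Σ_ε, with x† and ε uncorrelated (𝔼[(x†−μ)εᵀ] = 0). Let A ∈ ℝ^{m×n} and assume B := Aᵀ(AΣ_xAᵀ + Σ_ε)A is invertible. Let N be the unique symmetric solution of the Lyapunov equation AᵀAΣ_x + Σ_xAᵀA = NB + BN, and assume N is invertible. Then M = N⁻¹ − AᵀA together with any x₀ ∈ μ + ker(M) minimizes, over all symmetric M ∈ ℝ^{n×n} such that AᵀA+M is invertible and all x₀ ∈ ℝⁿ, the risk 𝔼‖(AᵀA+M)⁻¹(Aᵀ(Ax†+ε) + Mx₀) − x†‖² of the quadratically regularized reconstruction. -/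
open MeasureTheory Matrix

/-! With `R = (AᵀA + M)⁻¹` the reconstruction error is
`(RAᵀA - 1)(x† - μ) + RAᵀε + (1 - RAᵀA)(x₀ - μ)`, a sum of two centred, uncorrelated terms and
a constant, so the risk is `traceRisk R + ‖(1 - RAᵀA)(x₀ - μ)‖²` with
`traceRisk R = tr((RAᵀA - 1)Σₓ(RAᵀA - 1)ᵀ) + tr(RAᵀΣ_ε(RAᵀ)ᵀ)`.
For symmetric `R` the Lyapunov equation completes the square:
`traceRisk R = tr Σₓ - tr(NBN) + tr((R - N)B(R - N))`, and `B = Aᵀ(AΣₓAᵀ + Σ_ε)A` is positive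
semidefinite, so `R = N` minimises `traceRisk`, while `x₀ ∈ μ + ker(N⁻¹ - AᵀA)` kills the bias. -/

section SecondMoments

variable {Ω ι κ ρ : Type*} [MeasurableSpace Ω] {P : Measure Ω} [Fintype ι] [Fintype κ]
  [Fintype ρ] {u : Ω → ι → ℝ} {v : Ω → κ → ℝ}

lemma MeasureTheory.MemLp.mulVec {p : ENNReal} (hu : MemLp u p P) (D : Matrix ρ ι ℝ) :
    MemLp (fun ω ↦ D *ᵥ u ω) p P :=
  (mulVecLin D).toContinuousLinearMap.comp_memLp' hu

lemma integrable_dotProduct {w : Ω → ι → ℝ} (hu : MemLp u 2 P) (hw : MemLp w 2 P) :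
    Integrable (fun ω ↦ u ω ⬝ᵥ w ω) P :=
  integrable_finsetSum _ fun i _ ↦ (hu.eval i).integrable_mul (hw.eval i)

lemma integral_const_dotProduct (hu : Integrable u P) (a : ι → ℝ) :
    ∫ ω, a ⬝ᵥ u ω ∂P = a ⬝ᵥ ∫ ω, u ω ∂P := by
  simp only [dotProduct, eval_integral hu.eval]
  rw [integral_finsetSum _ fun i _ ↦ (hu.eval i).const_mul _]
  simp only [integral_const_mul]

lemma integral_dotProduct_mul_dotProduct_s10 (hu : MemLp u 2 P) (hv : MemLp v 2 P)
    {C : Matrix ι κ ℝ} (hC : ∀ i j, ∫ ω, u ω i * v ω j ∂P = C i j) (a : ι → ℝ) (b : κ → ℝ) :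
    ∫ ω, (a ⬝ᵥ u ω) * (b ⬝ᵥ v ω) ∂P = a ⬝ᵥ C *ᵥ b := by
  have hexpand : ∀ ω, (a ⬝ᵥ u ω) * (b ⬝ᵥ v ω) = ∑ i, ∑ j, a i * b j * (u ω i * v ω j) := by
    intro ω
    simp only [dotProduct, Finset.sum_mul_sum]
    exact Finset.sum_congr rfl fun _ _ ↦ Finset.sum_congr rfl fun _ _ ↦ by ring
  have hint : ∀ i j, Integrable (fun ω ↦ u ω i * v ω j) P :=
    fun i j ↦ (hu.eval i).integrable_mul (hv.eval j)
  simp_rw [hexpand]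
  rw [integral_finsetSum _ fun i _ ↦ integrable_finsetSum _ fun j _ ↦ (hint i j).const_mul _]
  simp_rw [integral_finsetSum _ fun j _ ↦ (hint _ j).const_mul _, integral_const_mul, hC,
    dotProduct, mulVec, dotProduct, Finset.mul_sum]
  exact Finset.sum_congr rfl fun _ _ ↦ Finset.sum_congr rfl fun _ _ ↦ by ring

lemma integral_mulVec_dotProduct_mulVec (hu : MemLp u 2 P) (hv : MemLp v 2 P)
    {C : Matrix ι κ ℝ} (hC : ∀ i j, ∫ ω, u ω i * v ω j ∂P = C i j)
    (D : Matrix ρ ι ℝ) (E : Matrix ρ κ ℝ) :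
    ∫ ω, D *ᵥ u ω ⬝ᵥ E *ᵥ v ω ∂P = trace (D * C * Eᵀ) := by
  have hint : ∀ k, Integrable (fun ω ↦ (D *ᵥ u ω) k * (E *ᵥ v ω) k) P :=
    fun k ↦ ((hu.mulVec D).eval k).integrable_mul ((hv.mulVec E).eval k)
  simp only [dotProduct]
  rw [integral_finsetSum _ fun k _ ↦ hint k]
  refine Finset.sum_congr rfl fun k _ ↦ ?_
  rw [diag_apply, mul_apply]
  simp only [mulVec]
  rw [integral_dotProduct_mul_dotProduct_s10 hu hv hC, dotProduct_mulVec]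
  rfl

lemma posSemidef_of_integral_mul (hu : MemLp u 2 P) {C : Matrix ι ι ℝ}
    (hC : ∀ i j, ∫ ω, u ω i * u ω j ∂P = C i j) : C.PosSemidef := by
  refine .of_dotProduct_mulVec_nonneg ?_ fun a ↦ ?_
  · ext i j
    simp only [conjTranspose_apply, star_trivial, ← hC, mul_comm]
  · rw [star_trivial, ← integral_dotProduct_mul_dotProduct_s10 hu hu hC]
    exact integral_nonneg fun ω ↦ mul_self_nonneg _

lemma integral_dotProduct_self_mulVec_add_mulVec_add [IsProbabilityMeasure P]
    (hu : MemLp u 2 P) (hv : MemLp v 2 P) (hu0 : ∫ ω, u ω ∂P = 0) (hv0 : ∫ ω, v ω ∂P = 0)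
    {Su : Matrix ι ι ℝ} (hSu : ∀ i j, ∫ ω, u ω i * u ω j ∂P = Su i j)
    {Sv : Matrix κ κ ℝ} (hSv : ∀ i j, ∫ ω, v ω i * v ω j ∂P = Sv i j)
    (huv : ∀ i j, ∫ ω, u ω i * v ω j ∂P = 0)
    (D : Matrix ρ ι ℝ) (E : Matrix ρ κ ℝ) (c : ρ → ℝ) :
    ∫ ω, (D *ᵥ u ω + E *ᵥ v ω + c) ⬝ᵥ (D *ᵥ u ω + E *ᵥ v ω + c) ∂P =
      trace (D * Su * Dᵀ) + trace (E * Sv * Eᵀ) + c ⬝ᵥ c := by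
  have hexpand : ∀ ω, (D *ᵥ u ω + E *ᵥ v ω + c) ⬝ᵥ (D *ᵥ u ω + E *ᵥ v ω + c) =
      D *ᵥ u ω ⬝ᵥ D *ᵥ u ω + E *ᵥ v ω ⬝ᵥ E *ᵥ v ω + 2 * (D *ᵥ u ω ⬝ᵥ E *ᵥ v ω) +
        2 * ((c ᵥ* D) ⬝ᵥ u ω) + 2 * ((c ᵥ* E) ⬝ᵥ v ω) + c ⬝ᵥ c := by
    intro ω
    simp only [add_dotProduct, dotProduct_add, ← dotProduct_mulVec, dotProduct_comm c,
      dotProduct_comm (E *ᵥ v ω) (D *ᵥ u ω)]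
    ring
  have hDu := hu.mulVec D
  have hEv := hv.mulVec E
  have h1 := integrable_dotProduct hDu hDu
  have h2 := integrable_dotProduct hEv hEv
  have h3 := integrable_dotProduct hDu hEv
  have h4 := integrable_dotProduct (memLp_const (c ᵥ* D)) hu
  have h5 := integrable_dotProduct (memLp_const (c ᵥ* E)) hv
  simp_rw [hexpand]
  rw [integral_add (by fun_prop) (by fun_prop), integral_add (by fun_prop) (by fun_prop),
    integral_add (by fun_prop) (by fun_prop), integral_add (by fun_prop) (by fun_prop),
    integral_add (by fun_prop) (by fun_prop), integral_const_mul, integral_const_mul,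
    integral_const_mul, integral_mulVec_dotProduct_mulVec hu hu hSu,
    integral_mulVec_dotProduct_mulVec hv hv hSv,
    integral_mulVec_dotProduct_mulVec hu hv (C := 0) huv,
    integral_const_dotProduct (hu.integrable one_le_two), hu0,
    integral_const_dotProduct (hv.integrable one_le_two), hv0]
  simp

end SecondMoments

section Reconstruction

variable {ι κ : Type*} [Fintype ι] [DecidableEq ι] [Fintype κ]

def traceRisk (A : Matrix κ ι ℝ) (Sx : Matrix ι ι ℝ) (Se : Matrix κ κ ℝ) (X : Matrix ι ι ℝ) :
    ℝ :=
  trace ((X * (Aᵀ * A) - 1) * Sx * (X * (Aᵀ * A) - 1)ᵀ) + trace (X * Aᵀ * Se * (X * Aᵀ)ᵀ)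

lemma traceRisk_eq_of_lyapunov {A : Matrix κ ι ℝ} {Sx : Matrix ι ι ℝ} {Se : Matrix κ κ ℝ}
    {N X : Matrix ι ι ℝ} (hX : Xᵀ = X)
    (hLyap : Aᵀ * A * Sx + Sx * (Aᵀ * A) =
      N * (Aᵀ * (A * Sx * Aᵀ + Se) * A) + Aᵀ * (A * Sx * Aᵀ + Se) * A * N) :
    traceRisk A Sx Se X = trace Sx - trace (N * (Aᵀ * (A * Sx * Aᵀ + Se) * A) * N) +
      trace ((X - N) * (Aᵀ * (A * Sx * Aᵀ + Se) * A) * (X - N)) := by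
  unfold traceRisk
  rw [transpose_sub, transpose_mul, transpose_mul, transpose_mul, transpose_transpose, hX,
    transpose_one]
  set K := Aᵀ * A
  set B := Aᵀ * (A * Sx * Aᵀ + Se) * A with hB
  have hXBX :
      trace (X * B * X) = trace (X * K * Sx * K * X) + trace (X * Aᵀ * Se * (A * X)) := by
    rw [← trace_add]
    congr 1
    simp only [hB, K, Matrix.mul_add, Matrix.add_mul, Matrix.mul_assoc]
  have hcross := congrArg (fun Y ↦ trace (X * Y)) hLyap
  have hSxKX : trace (Sx * (K * X)) = trace (X * (Sx * K)) := by
    rw [← Matrix.mul_assoc, trace_mul_comm]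
  have hNBX : trace (N * B * X) = trace (X * (N * B)) := trace_mul_comm _ _
  simp only [Matrix.mul_add, Matrix.mul_sub, Matrix.sub_mul, Matrix.mul_one, Matrix.one_mul,
    trace_add, trace_sub] at hcross ⊢
  simp only [Matrix.mul_assoc] at hcross hXBX hSxKX hNBX ⊢
  linarith

lemma traceRisk_le_of_lyapunov {A : Matrix κ ι ℝ} {Sx : Matrix ι ι ℝ} {Se : Matrix κ κ ℝ}
    {N X : Matrix ι ι ℝ} (hSx : Sx.PosSemidef) (hSe : Se.PosSemidef) (hN : Nᵀ = N)
    (hX : Xᵀ = X)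
    (hLyap : Aᵀ * A * Sx + Sx * (Aᵀ * A) =
      N * (Aᵀ * (A * Sx * Aᵀ + Se) * A) + Aᵀ * (A * Sx * Aᵀ + Se) * A * N) :
    traceRisk A Sx Se N ≤ traceRisk A Sx Se X := by
  have hB : (Aᵀ * (A * Sx * Aᵀ + Se) * A).PosSemidef := by
    simpa only [conjTranspose_eq_transpose_of_trivial] using
      ((hSx.mul_mul_conjTranspose_same A).add hSe).conjTranspose_mul_mul_same A
  have hXN : 0 ≤ trace ((X - N) * (Aᵀ * (A * Sx * Aᵀ + Se) * A) * (X - N)) := by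
    simpa only [conjTranspose_eq_transpose_of_trivial, transpose_sub, hX, hN] using
      (hB.mul_mul_conjTranspose_same (X - N)).trace_nonneg
  rw [traceRisk_eq_of_lyapunov hN hLyap, traceRisk_eq_of_lyapunov hX hLyap, sub_self,
    Matrix.zero_mul, Matrix.zero_mul, trace_zero, add_zero]
  linarith

lemma mulVec_reconstruction_sub {A : Matrix κ ι ℝ} {M R : Matrix ι ι ℝ}
    (hR : R * (Aᵀ * A + M) = 1) (x μ y : ι → ℝ) (e : κ → ℝ) :
    R *ᵥ (Aᵀ *ᵥ (A *ᵥ x + e) + M *ᵥ y) - x =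
      (R * (Aᵀ * A) - 1) *ᵥ (x - μ) + (R * Aᵀ) *ᵥ e + (1 - R * (Aᵀ * A)) *ᵥ (y - μ) := by
  have hRM : R * M = 1 - R * (Aᵀ * A) := eq_sub_of_add_eq' (by rw [← Matrix.mul_add, hR])
  simp only [mulVec_add, mulVec_sub, sub_mulVec, mulVec_mulVec, one_mulVec, hRM]
  abel

variable {Ω : Type*} [MeasurableSpace Ω] {P : Measure Ω} [IsProbabilityMeasure P]
  {x : Ω → ι → ℝ} {ε : Ω → κ → ℝ} {μ : ι → ℝ} {Sx : Matrix ι ι ℝ} {Se : Matrix κ κ ℝ}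

lemma integral_sum_sq_reconstruction_sub (hx : MemLp x 2 P) (hε : MemLp ε 2 P)
    (hμ : ∫ ω, x ω ∂P = μ) (hSx : ∀ i j, ∫ ω, (x ω i - μ i) * (x ω j - μ j) ∂P = Sx i j)
    (hεmean : ∫ ω, ε ω ∂P = 0) (hSe : ∀ i j, ∫ ω, ε ω i * ε ω j ∂P = Se i j)
    (huncorr : ∀ i j, ∫ ω, (x ω i - μ i) * ε ω j ∂P = 0)
    {A : Matrix κ ι ℝ} {M R : Matrix ι ι ℝ} (hR : R * (Aᵀ * A + M) = 1) (y : ι → ℝ) :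
    ∫ ω, ∑ i, (R *ᵥ (Aᵀ *ᵥ (A *ᵥ x ω + ε ω) + M *ᵥ y) - x ω) i ^ 2 ∂P =
      traceRisk A Sx Se R + ∑ i, ((1 - R * (Aᵀ * A)) *ᵥ (y - μ)) i ^ 2 := by
  have hu0 : ∫ ω, x ω - μ ∂P = 0 := by
    rw [integral_sub (hx.integrable one_le_two) (integrable_const μ), hμ, integral_const,
      probReal_univ, one_smul, sub_self]
  simp only [sq, mulVec_reconstruction_sub hR _ μ]
  exact integral_dotProduct_self_mulVec_add_mulVec_add (hx.sub (memLp_const μ)) hε hu0 hεmean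
    hSx hSe huncorr _ _ _

end Reconstruction

theorem optimal_quadratic_general {Ωs : Type*} [MeasurableSpace Ωs]
    (P : Measure Ωs) [IsProbabilityMeasure P] {n m : ℕ}
    (x : Ωs → Fin n → ℝ) (ε : Ωs → Fin m → ℝ)
    (hx : MemLp x 2 P) (hε : MemLp ε 2 P)
    (μx : Fin n → ℝ) (hμx : ∫ ω, x ω ∂P = μx)
    (Sx : Matrix (Fin n) (Fin n) ℝ)
    (hSx : ∀ i j, ∫ ω, (x ω i - μx i) * (x ω j - μx j) ∂P = Sx i j)
    (hεmean : ∫ ω, ε ω ∂P = 0)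
    (Se : Matrix (Fin m) (Fin m) ℝ)
    (hSe : ∀ i j, ∫ ω, ε ω i * ε ω j ∂P = Se i j)
    (huncorr : ∀ i j, ∫ ω, (x ω i - μx i) * ε ω j ∂P = 0)
    (A : Matrix (Fin m) (Fin n) ℝ)
    (N : Matrix (Fin n) (Fin n) ℝ) (hNsymm : Nᵀ = N)
    (hLyap : Aᵀ * A * Sx + Sx * (Aᵀ * A) =
      N * (Aᵀ * (A * Sx * Aᵀ + Se) * A) + Aᵀ * (A * Sx * Aᵀ + Se) * A * N)
    (hN : IsUnit N) :
    ∀ x₀ : Fin n → ℝ,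
      (N⁻¹ - Aᵀ * A).mulVec (x₀ - μx) = 0 →
      ∀ (M : Matrix (Fin n) (Fin n) ℝ) (x₀' : Fin n → ℝ),
        Mᵀ = M → IsUnit (Aᵀ * A + M) →
        ∫ ω, ∑ i, (((Aᵀ * A + (N⁻¹ - Aᵀ * A))⁻¹).mulVec
            (Aᵀ.mulVec (A.mulVec (x ω) + ε ω) +
              (N⁻¹ - Aᵀ * A).mulVec x₀) - x ω) i ^ 2 ∂P ≤
        ∫ ω, ∑ i, (((Aᵀ * A + M)⁻¹).mulVec
            (Aᵀ.mulVec (A.mulVec (x ω) + ε ω) + M.mulVec x₀') - x ω) i ^ 2 ∂P := by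
  intro x₀ hx₀ M x₀' hM hAM
  have hNdet : IsUnit N.det := (isUnit_iff_isUnit_det N).mp hN
  have hAMdet : IsUnit (Aᵀ * A + M).det := (isUnit_iff_isUnit_det _).mp hAM
  have hcand : Aᵀ * A + (N⁻¹ - Aᵀ * A) = N⁻¹ := add_sub_cancel _ _
  have hbias : (1 - N * (Aᵀ * A)) *ᵥ (x₀ - μx) = 0 := by
    rw [← mul_nonsing_inv N hNdet, ← Matrix.mul_sub, ← mulVec_mulVec, hx₀, mulVec_zero]
  have hRsymm : (Aᵀ * A + M)⁻¹ᵀ = (Aᵀ * A + M)⁻¹ := by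
    rw [transpose_nonsing_inv, transpose_add, transpose_mul, transpose_transpose, hM]
  rw [hcand, nonsing_inv_nonsing_inv N hNdet,
    integral_sum_sq_reconstruction_sub hx hε hμx hSx hεmean hSe huncorr
      (by rw [hcand, mul_nonsing_inv N hNdet]),
    integral_sum_sq_reconstruction_sub hx hε hμx hSx hεmean hSe huncorr
      (nonsing_inv_mul _ hAMdet), hbias]
  simp only [Pi.zero_apply, sq, mul_zero, Finset.sum_const_zero, add_zero]
  have hSxpsd := posSemidef_of_integral_mul (hx.sub (memLp_const μx)) hSx
  have hSepsd := posSemidef_of_integral_mul hε hSe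
  exact le_add_of_le_of_nonneg (traceRisk_le_of_lyapunov hSxpsd hSepsd hNsymm hRsymm hLyap)
    (Finset.sum_nonneg fun i _ ↦ mul_self_nonneg _)

/-- **Optimal quadratic regularization.** With `x†` square-integrable (mean `μx`,
covariance `Sx`), `ε` square-integrable (mean `0`, covariance `Se`), uncorrelated,
`B := Aᵀ(A Sx Aᵀ + Se)A` invertible, and `N` the symmetric solution of the
Lyapunov equation `AᵀA Sx + Sx AᵀA = NB + BN` with `N` invertible, the choice
`M = N⁻¹ − AᵀA` together with any `x₀ ∈ μx + ker M` minimizes the risk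
`𝔼‖(AᵀA+M)⁻¹(Aᵀ(Ax†+ε) + M x₀) − x†‖²` over all symmetric `M` with `AᵀA+M`
invertible and all `x₀`. -/
theorem optimal_quadratic {Ωs : Type*} [MeasurableSpace Ωs]
    (P : Measure Ωs) [IsProbabilityMeasure P] {n m : ℕ}
    (x : Ωs → Fin n → ℝ) (ε : Ωs → Fin m → ℝ)
    (hx : MemLp x 2 P) (hε : MemLp ε 2 P)
    (μx : Fin n → ℝ) (hμx : ∫ ω, x ω ∂P = μx)
    (Sx : Matrix (Fin n) (Fin n) ℝ)
    (hSx : ∀ i j, ∫ ω, (x ω i - μx i) * (x ω j - μx j) ∂P = Sx i j)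
    (hεmean : ∫ ω, ε ω ∂P = 0)
    (Se : Matrix (Fin m) (Fin m) ℝ)
    (hSe : ∀ i j, ∫ ω, ε ω i * ε ω j ∂P = Se i j)
    (huncorr : ∀ i j, ∫ ω, (x ω i - μx i) * ε ω j ∂P = 0)
    (A : Matrix (Fin m) (Fin n) ℝ)
    (hB : IsUnit (Aᵀ * (A * Sx * Aᵀ + Se) * A))
    (N : Matrix (Fin n) (Fin n) ℝ) (hNsymm : Nᵀ = N)
    (hLyap : Aᵀ * A * Sx + Sx * (Aᵀ * A) =
      N * (Aᵀ * (A * Sx * Aᵀ + Se) * A) + Aᵀ * (A * Sx * Aᵀ + Se) * A * N)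
    (hN : IsUnit N) :
    ∀ x₀ : Fin n → ℝ,
      (N⁻¹ - Aᵀ * A).mulVec (x₀ - μx) = 0 →
      ∀ (M : Matrix (Fin n) (Fin n) ℝ) (x₀' : Fin n → ℝ),
        Mᵀ = M → IsUnit (Aᵀ * A + M) →
        ∫ ω, ∑ i, (((Aᵀ * A + (N⁻¹ - Aᵀ * A))⁻¹).mulVec
            (Aᵀ.mulVec (A.mulVec (x ω) + ε ω) +
              (N⁻¹ - Aᵀ * A).mulVec x₀) - x ω) i ^ 2 ∂P ≤
        ∫ ω, ∑ i, (((Aᵀ * A + M)⁻¹).mulVec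
            (Aᵀ.mulVec (A.mulVec (x ω) + ε ω) + M.mulVec x₀') - x ω) i ^ 2 ∂P :=
  optimal_quadratic_general P x ε hx hε μx hμx Sx hSx hεmean Se hSe huncorr A N hNsymm hLyap hN
end

section
/- Let A ∈ ℝ^{m×n} with AᵀA invertible, let Σ_x ∈ ℝ^{n×n} and Σ_ε ∈ ℝ^{m×m} be symmetric positive definite, and assume AΣ_xAᵀ + Σ_ε and AᵀA + AᵀΣ_εA(AᵀA)⁻¹Σ_x⁻¹ are invertible. Then the following are equivalent: (1) the optimal Lavrentiev linear map W_Lav := (AᵀA + AᵀΣ_εA(AᵀA)⁻¹Σ_x⁻¹)⁻¹Aᵀ equals the LMMSE linear map W_LMMSE := Σ_xAᵀ(AΣ_xAᵀ + Σ_ε)⁻¹; (2) AᵀΣ_ε(I − A(AᵀA)⁻¹Aᵀ) = 0, i.e., AᵀΣ_ε annihilates the orthogonal projection onto ker(Aᵀ). -/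
/-!
Writing `L = AᵀA + AᵀΣ_εA(AᵀA)⁻¹Σ_x⁻¹` and `G = AΣ_xAᵀ + Σ_ε`, the two maps are `L⁻¹Aᵀ` and
`Σ_xAᵀG⁻¹`, which agree iff `AᵀG = LΣ_xAᵀ`. Expanding, the `AᵀAΣ_xAᵀ` terms cancel and
`Σ_x⁻¹Σ_x = 1` leaves `AᵀG − LΣ_xAᵀ = AᵀΣ_ε(1 − A(AᵀA)⁻¹Aᵀ)`.
-/

open Matrix

theorem Matrix.nonsing_inv_mul_eq_mul_nonsing_inv_iff {ι κ α : Type*} [Fintype ι] [Fintype κ]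
    [DecidableEq ι] [DecidableEq κ] [CommRing α] {L : Matrix ι ι α} {G : Matrix κ κ α}
    (hL : IsUnit L) (hG : IsUnit G) (B C : Matrix ι κ α) :
    L⁻¹ * B = C * G⁻¹ ↔ B * G = L * C := by
  have hLd := (isUnit_iff_isUnit_det L).mp hL
  have hGd := (isUnit_iff_isUnit_det G).mp hG
  constructor
  · intro h
    rw [← mul_nonsing_inv_cancel_left L B hLd, h, Matrix.mul_assoc, Matrix.mul_assoc,
      nonsing_inv_mul G hGd, Matrix.mul_one]
  · intro h
    rw [← nonsing_inv_mul_cancel_left L C hLd, ← h, Matrix.mul_assoc, Matrix.mul_assoc,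
      mul_nonsing_inv G hGd, Matrix.mul_one]

theorem lmmse_normal_sub_lavrentiev_normal {m n α : Type*} [Fintype m] [Fintype n]
    [DecidableEq m] [DecidableEq n] [CommRing α]
    (A : Matrix m n α) (P Sx : Matrix n n α) (Se : Matrix m m α) (hSx : IsUnit Sx) :
    Aᵀ * (A * Sx * Aᵀ + Se) - (Aᵀ * A + Aᵀ * Se * A * P * Sx⁻¹) * (Sx * Aᵀ) =
      Aᵀ * Se * (1 - A * P * Aᵀ) := by
  have hSx_cancel : Sx⁻¹ * (Sx * Aᵀ) = Aᵀ :=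
    nonsing_inv_mul_cancel_left Sx Aᵀ ((isUnit_iff_isUnit_det Sx).mp hSx)
  simp only [Matrix.mul_add, Matrix.add_mul, Matrix.mul_sub, Matrix.mul_one, Matrix.mul_assoc,
    hSx_cancel]
  abel

theorem lavrentiev_eq_lmmse_iff_general {m n : ℕ}
    (A : Matrix (Fin m) (Fin n) ℝ)
    (Sx : Matrix (Fin n) (Fin n) ℝ) (hSx : Sx.PosDef)
    (Se : Matrix (Fin m) (Fin m) ℝ)
    (hinv1 : IsUnit (A * Sx * Aᵀ + Se))
    (hinv2 : IsUnit (Aᵀ * A + Aᵀ * Se * A * (Aᵀ * A)⁻¹ * Sx⁻¹)) :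
    (Aᵀ * A + Aᵀ * Se * A * (Aᵀ * A)⁻¹ * Sx⁻¹)⁻¹ * Aᵀ =
        Sx * Aᵀ * (A * Sx * Aᵀ + Se)⁻¹ ↔
      Aᵀ * Se * (1 - A * (Aᵀ * A)⁻¹ * Aᵀ) = 0 := by
  rw [nonsing_inv_mul_eq_mul_nonsing_inv_iff hinv2 hinv1, ← sub_eq_zero,
    lmmse_normal_sub_lavrentiev_normal A _ Sx Se hSx.isUnit]

/-- **When optimal Lavrentiev equals LMMSE.** With `AᵀA` invertible, `Sx`, `Se`
symmetric positive definite, and the indicated matrices invertible, the optimal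
Lavrentiev linear map `(AᵀA + Aᵀ Se A (AᵀA)⁻¹ Sx⁻¹)⁻¹ Aᵀ` equals the LMMSE
linear map `Sx Aᵀ (A Sx Aᵀ + Se)⁻¹` if and only if
`Aᵀ Se (I − A(AᵀA)⁻¹Aᵀ) = 0`, i.e. `Aᵀ Se` annihilates the orthogonal
projection onto `ker(Aᵀ)`. -/
theorem lavrentiev_eq_lmmse_iff {m n : ℕ}
    (A : Matrix (Fin m) (Fin n) ℝ) (hATA : IsUnit (Aᵀ * A))
    (Sx : Matrix (Fin n) (Fin n) ℝ) (hSx : Sx.PosDef)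
    (Se : Matrix (Fin m) (Fin m) ℝ) (hSe : Se.PosDef)
    (hinv1 : IsUnit (A * Sx * Aᵀ + Se))
    (hinv2 : IsUnit (Aᵀ * A + Aᵀ * Se * A * (Aᵀ * A)⁻¹ * Sx⁻¹)) :
    (Aᵀ * A + Aᵀ * Se * A * (Aᵀ * A)⁻¹ * Sx⁻¹)⁻¹ * Aᵀ =
        Sx * Aᵀ * (A * Sx * Aᵀ + Se)⁻¹ ↔
      Aᵀ * Se * (1 - A * (Aᵀ * A)⁻¹ * Aᵀ) = 0 :=
  lavrentiev_eq_lmmse_iff_general A Sx hSx Se hinv1 hinv2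
end

section
/- Let (Ω,𝓕,ℙ) be a probability space, let x† be a square-integrable random vector in ℝⁿ with mean μ and positive definite covariance Σ_x, and let ε be a square-integrable random vector in ℝᵐ with mean 0 and positive definite covariance Σ_ε, with x† and ε uncorrelated (𝔼[(x†−μ)εᵀ] = 0). Let A ∈ ℝ^{m×n}. Then the choices Ω = Σ_ε⁻¹, any R ∈ ℝ^{n×n} with RᵀR = Σ_x⁻¹, and x₀ = μ minimize, over all positive definite noise weights Ω ∈ ℝ^{m×m}, all R ∈ ℝ^{n×n} with AᵀΩA + RᵀR invertible, and all x₀ ∈ ℝⁿ, the risk 𝔼‖(AᵀΩA + RᵀR)⁻¹(AᵀΩ(Ax†+ε) + RᵀRx₀) − x†‖² of the noise-weighted Tikhonov reconstruction; moreover, the resulting affine map equals the LMMSE estimator, so its risk equals the minimal risk over all affine maps. -/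
/-!
The risk of an affine reconstruction `y ↦ W y + b` is the trace of its error covariance
`(W A - 1) Σx (W A - 1)ᵀ + W Σε Wᵀ` plus the squared bias `‖(W A - 1) μ + b‖²`: this is the
second-moment identity for the stacked centred vector `(x† - μ, ε)`, whose second-moment matrix is
block diagonal because signal and noise are uncorrelated. Completing the square with
`M = A Σx Aᵀ + Σε` rewrites the error covariance as `(W - W*) M (W - W*)ᵀ + Σx - W* A Σx`, so the
risk is least exactly at `W* = Σx Aᵀ M⁻¹` and `b* = (1 - W* A) μ`. The push-through identity
`(Aᵀ Σε⁻¹ A + Σx⁻¹) Σx Aᵀ = Aᵀ Σε⁻¹ M` shows that Tikhonov regularization with `Ω = Σε⁻¹`,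
`RᵀR = Σx⁻¹` and `x₀ = μ` is this affine map, and every other Tikhonov reconstruction is affine.
-/

open MeasureTheory Matrix

/-- The risk `𝔼‖W(Ax†+ε)+b−x†‖²` of the affine reconstruction map `y ↦ Wy + b`. -/
noncomputable def affineRisk {Ωs : Type*} [MeasurableSpace Ωs] (P : Measure Ωs)
    {n m : ℕ} (x : Ωs → Fin n → ℝ) (ε : Ωs → Fin m → ℝ)
    (A : Matrix (Fin m) (Fin n) ℝ) (W : Matrix (Fin n) (Fin m) ℝ) (b : Fin n → ℝ) : ℝ :=
  ∫ ω, ∑ i, (W.mulVec (A.mulVec (x ω) + ε ω) + b - x ω) i ^ 2 ∂P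

/-- The risk of the noise-weighted Tikhonov reconstruction
`x̂(y) = (AᵀΩA + RᵀR)⁻¹(AᵀΩ y + RᵀR x₀)` with noise weight `O`, regularizer `R`
and offset `x₀`. -/
noncomputable def tikhonovRisk {Ωs : Type*} [MeasurableSpace Ωs] (P : Measure Ωs)
    {n m : ℕ} (x : Ωs → Fin n → ℝ) (ε : Ωs → Fin m → ℝ)
    (A : Matrix (Fin m) (Fin n) ℝ) (O : Matrix (Fin m) (Fin m) ℝ)
    (R : Matrix (Fin n) (Fin n) ℝ) (x₀ : Fin n → ℝ) : ℝ :=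
  affineRisk P x ε A ((Aᵀ * O * A + Rᵀ * R)⁻¹ * (Aᵀ * O))
    (((Aᵀ * O * A + Rᵀ * R)⁻¹ * (Rᵀ * R)).mulVec x₀)

section SecondMoments

variable {Ωs κ ι : Type*} [MeasurableSpace Ωs] {P : Measure Ωs} [Fintype κ]
  {z : Ωs → κ → ℝ}

lemma integral_mulVec_apply_eq_zero (hz : ∀ k, Integrable (fun ω => z ω k) P)
    (hz0 : ∀ k, ∫ ω, z ω k ∂P = 0) (K : Matrix ι κ ℝ) (i : ι) :
    ∫ ω, (K *ᵥ z ω) i ∂P = 0 := by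
  simp only [mulVec, dotProduct]
  rw [integral_finsetSum _ fun k _ => (hz k).const_mul _]
  simp [integral_const_mul, hz0]

lemma integral_mulVec_apply_mul_mulVec_apply {S : Matrix κ κ ℝ} {ι' : Type*}
    (hz : ∀ k, MemLp (fun ω => z ω k) 2 P)
    (hS : ∀ k l, ∫ ω, z ω k * z ω l ∂P = S k l) (K : Matrix ι κ ℝ) (L : Matrix ι' κ ℝ)
    (i : ι) (j : ι') :
    ∫ ω, (K *ᵥ z ω) i * (L *ᵥ z ω) j ∂P = (K * S * Lᵀ) i j := by
  have hint : ∀ k l, Integrable (fun ω => K i k * L j l * (z ω k * z ω l)) P :=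
    fun k l => ((hz k).integrable_mul (hz l)).const_mul _
  calc ∫ ω, (K *ᵥ z ω) i * (L *ᵥ z ω) j ∂P
      = ∫ ω, ∑ k, ∑ l, K i k * L j l * (z ω k * z ω l) ∂P := by
        congr 1 with ω
        simp only [mulVec, dotProduct, Finset.sum_mul_sum]
        exact Finset.sum_congr rfl fun k _ => Finset.sum_congr rfl fun l _ => by ring
    _ = ∑ k, ∑ l, K i k * L j l * S k l := by
        rw [integral_finsetSum _ fun k _ => integrable_finsetSum _ fun l _ => hint k l]
        simp_rw [integral_finsetSum _ fun l _ => hint _ l, integral_const_mul, hS]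
    _ = (K * S * Lᵀ) i j := by
        simp only [mul_apply, transpose_apply, Finset.sum_mul]
        rw [Finset.sum_comm]
        exact Finset.sum_congr rfl fun k _ => Finset.sum_congr rfl fun l _ => by ring

lemma integral_sum_sq_mulVec_add [IsProbabilityMeasure P] [Fintype ι] {S : Matrix κ κ ℝ}
    (hz : ∀ k, MemLp (fun ω => z ω k) 2 P) (hz0 : ∀ k, ∫ ω, z ω k ∂P = 0)
    (hS : ∀ k l, ∫ ω, z ω k * z ω l ∂P = S k l) (K : Matrix ι κ ℝ) (c : ι → ℝ) :
    ∫ ω, ∑ i, (K *ᵥ z ω + c) i ^ 2 ∂P = trace (K * S * Kᵀ) + ∑ i, c i ^ 2 := by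
  have hmem : ∀ i, MemLp (fun ω => (K *ᵥ z ω) i) 2 P := fun i =>
    memLp_finsetSum _ fun k _ => (hz k).const_mul (K i k)
  have hsq : ∀ i, Integrable (fun ω => (K *ᵥ z ω) i * (K *ᵥ z ω) i) P :=
    fun i => (hmem i).integrable_mul (hmem i)
  have hlin : ∀ i, Integrable (fun ω => 2 * c i * (K *ᵥ z ω) i) P :=
    fun i => ((hmem i).integrable one_le_two).const_mul _
  have hexpand : ∀ ω i, (K *ᵥ z ω + c) i ^ 2
      = (K *ᵥ z ω) i * (K *ᵥ z ω) i + 2 * c i * (K *ᵥ z ω) i + c i ^ 2 := fun ω i => by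
    simp only [Pi.add_apply]; ring
  have hint : ∀ i, Integrable (fun ω =>
      (K *ᵥ z ω) i * (K *ᵥ z ω) i + 2 * c i * (K *ᵥ z ω) i + c i ^ 2) P :=
    fun i => ((hsq i).add (hlin i)).add (integrable_const _)
  simp_rw [hexpand]
  rw [integral_finsetSum _ fun i _ => hint i, trace, ← Finset.sum_add_distrib]
  refine Finset.sum_congr rfl fun i _ => ?_
  rw [integral_add ?_ (integrable_const _), integral_add (hsq i) (hlin i),
    integral_const_mul, integral_mulVec_apply_mul_mulVec_apply hz hS,
    integral_mulVec_apply_eq_zero (fun k => (hz k).integrable one_le_two) hz0]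
  · simp
  · exact (hsq i).add (hlin i)

end SecondMoments

section Algebra

variable {R ι κ : Type*} [CommRing R] [Fintype ι] [Fintype κ] [DecidableEq κ]
  {A : Matrix ι κ R} {Sx : Matrix κ κ R} {Se : Matrix ι ι R}

def errorCovariance (A : Matrix ι κ R) (Sx : Matrix κ κ R) (Se : Matrix ι ι R)
    (W : Matrix κ ι R) : Matrix κ κ R :=
  (W * A - 1) * Sx * (W * A - 1)ᵀ + W * Se * Wᵀ

lemma errorCovariance_eq_of_mul_eq (hSx : Sxᵀ = Sx) (hSe : Seᵀ = Se) {W₀ : Matrix κ ι R}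
    (hW₀ : W₀ * (A * Sx * Aᵀ + Se) = Sx * Aᵀ) (W : Matrix κ ι R) :
    errorCovariance A Sx Se W
      = (W - W₀) * (A * Sx * Aᵀ + Se) * (W - W₀)ᵀ + (Sx - W₀ * A * Sx) := by
  set M := A * Sx * Aᵀ + Se
  have hMW₀ : M * W₀ᵀ = A * Sx := by
    simpa [M, transpose_mul, hSx, hSe, Matrix.mul_assoc] using congrArg transpose hW₀
  have hWMW : W * M * Wᵀ = W * A * Sx * Aᵀ * Wᵀ + W * Se * Wᵀ := by
    simp only [M, Matrix.mul_add, Matrix.add_mul, Matrix.mul_assoc]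
  calc errorCovariance A Sx Se W
      = W * M * Wᵀ - W * (A * Sx) - Sx * Aᵀ * Wᵀ + Sx := by
        simp only [errorCovariance, hWMW, transpose_sub, transpose_mul, transpose_one,
          Matrix.sub_mul, Matrix.mul_sub, Matrix.mul_assoc, Matrix.mul_one, Matrix.one_mul]
        abel
    _ = W * M * Wᵀ - W * (M * W₀ᵀ) - W₀ * M * Wᵀ + W₀ * (M * W₀ᵀ) + (Sx - W₀ * A * Sx) := by
        rw [hMW₀, hW₀, Matrix.mul_assoc W₀ A Sx]
        abel
    _ = (W - W₀) * M * (W - W₀)ᵀ + (Sx - W₀ * A * Sx) := by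
        simp only [transpose_sub, Matrix.sub_mul, Matrix.mul_sub, Matrix.mul_assoc]
        abel

lemma tikhonov_gain_eq [DecidableEq ι] (hSx : IsUnit Sx.det) (hSe : IsUnit Se.det)
    (hK : IsUnit (Aᵀ * Se⁻¹ * A + Sx⁻¹).det) (hM : IsUnit (A * Sx * Aᵀ + Se).det) :
    (Aᵀ * Se⁻¹ * A + Sx⁻¹)⁻¹ * (Aᵀ * Se⁻¹) = Sx * Aᵀ * (A * Sx * Aᵀ + Se)⁻¹ := by
  set K := Aᵀ * Se⁻¹ * A + Sx⁻¹
  set M := A * Sx * Aᵀ + Se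
  have hpush : Aᵀ * Se⁻¹ * M = K * (Sx * Aᵀ) := by
    simp only [K, M, Matrix.add_mul, Matrix.mul_add, Matrix.mul_assoc, nonsing_inv_mul _ hSe,
      nonsing_inv_mul_cancel_left _ _ hSx, Matrix.mul_one]
  calc K⁻¹ * (Aᵀ * Se⁻¹) = K⁻¹ * (Aᵀ * Se⁻¹ * M * M⁻¹) := by
        rw [mul_nonsing_inv_cancel_right _ _ hM]
    _ = Sx * Aᵀ * M⁻¹ := by
        rw [hpush, Matrix.mul_assoc K, nonsing_inv_mul_cancel_left _ _ hK]

lemma tikhonov_offset_eq [DecidableEq ι] (hK : IsUnit (Aᵀ * Se⁻¹ * A + Sx⁻¹).det)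
    (hgain : (Aᵀ * Se⁻¹ * A + Sx⁻¹)⁻¹ * (Aᵀ * Se⁻¹) = Sx * Aᵀ * (A * Sx * Aᵀ + Se)⁻¹) :
    (Aᵀ * Se⁻¹ * A + Sx⁻¹)⁻¹ * Sx⁻¹ = 1 - Sx * Aᵀ * (A * Sx * Aᵀ + Se)⁻¹ * A := by
  set K := Aᵀ * Se⁻¹ * A + Sx⁻¹
  rw [← hgain, eq_sub_iff_add_eq, Matrix.mul_assoc K⁻¹, ← Matrix.mul_add, add_comm,
    nonsing_inv_mul _ hK]

end Algebra

lemma posDef_mul_mul_transpose_add {ι κ : Type*} [Fintype ι] [Fintype κ]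
    {S : Matrix κ κ ℝ} {T : Matrix ι ι ℝ} (hS : S.PosSemidef) (hT : T.PosDef)
    (B : Matrix ι κ ℝ) : (B * S * Bᵀ + T).PosDef := by
  simpa using PosDef.posSemidef_add (hS.mul_mul_conjTranspose_same B) hT

section Risk

variable {Ωs : Type*} [MeasurableSpace Ωs] {P : Measure Ωs} [IsProbabilityMeasure P] {n m : ℕ}
  {x : Ωs → Fin n → ℝ} {ε : Ωs → Fin m → ℝ} {μx : Fin n → ℝ}
  {Sx : Matrix (Fin n) (Fin n) ℝ} {Se : Matrix (Fin m) (Fin m) ℝ}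

lemma affineRisk_eq_trace_errorCovariance_add (hx : MemLp x 2 P) (hε : MemLp ε 2 P)
    (hμx : ∫ ω, x ω ∂P = μx) (hSx : ∀ i j, ∫ ω, (x ω i - μx i) * (x ω j - μx j) ∂P = Sx i j)
    (hεmean : ∫ ω, ε ω ∂P = 0) (hSe : ∀ i j, ∫ ω, ε ω i * ε ω j ∂P = Se i j)
    (huncorr : ∀ i j, ∫ ω, (x ω i - μx i) * ε ω j ∂P = 0)
    (A : Matrix (Fin m) (Fin n) ℝ) (W : Matrix (Fin n) (Fin m) ℝ) (b : Fin n → ℝ) :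
    affineRisk P x ε A W b
      = trace (errorCovariance A Sx Se W) + ∑ i, ((W * A - 1).mulVec μx + b) i ^ 2 := by
  set z : Ωs → Fin n ⊕ Fin m → ℝ := fun ω => Sum.elim (x ω - μx) (ε ω)
  have hz : ∀ k, MemLp (fun ω => z ω k) 2 P := by
    rintro (i | j)
    · exact (hx.eval i).sub (memLp_const _)
    · exact hε.eval j
  have hz0 : ∀ k, ∫ ω, z ω k ∂P = 0 := by
    rintro (i | j)
    · simp only [z, Sum.elim_inl, Pi.sub_apply]
      rw [integral_sub ((hx.eval i).integrable one_le_two) (integrable_const _),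
        ← eval_integral (fun i => (hx.eval i).integrable one_le_two), hμx]
      simp
    · simp only [z, Sum.elim_inr]
      rw [← eval_integral (fun j => (hε.eval j).integrable one_le_two), hεmean, Pi.zero_apply]
  have hS : ∀ k l, ∫ ω, z ω k * z ω l ∂P = fromBlocks Sx 0 0 Se k l := by
    rintro (i | i) (j | j)
    · simp [z, hSx]
    · simp [z, huncorr]
    · simp [z, mul_comm (ε _ i), huncorr]
    · simp [z, hSe]
  have herr : ∀ ω, W *ᵥ (A *ᵥ x ω + ε ω) + b - x ω
      = fromCols (W * A - 1) W *ᵥ z ω + ((W * A - 1) *ᵥ μx + b) := fun ω => by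
    simp only [z, fromCols_mulVec_sumElim, mulVec_add, mulVec_sub, sub_mulVec, one_mulVec,
      ← mulVec_mulVec]
    abel
  simp_rw [affineRisk, herr]
  rw [integral_sum_sq_mulVec_add hz hz0 hS]
  simp [errorCovariance, transpose_fromCols, fromCols_mul_fromBlocks, fromCols_mul_fromRows]

lemma isLeast_affineRisk (hx : MemLp x 2 P) (hε : MemLp ε 2 P)
    (hμx : ∫ ω, x ω ∂P = μx) (hSxPD : Sx.PosDef)
    (hSx : ∀ i j, ∫ ω, (x ω i - μx i) * (x ω j - μx j) ∂P = Sx i j)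
    (hεmean : ∫ ω, ε ω ∂P = 0) (hSePD : Se.PosDef) (hSe : ∀ i j, ∫ ω, ε ω i * ε ω j ∂P = Se i j)
    (huncorr : ∀ i j, ∫ ω, (x ω i - μx i) * ε ω j ∂P = 0) (A : Matrix (Fin m) (Fin n) ℝ) :
    IsLeast {r | ∃ (W : Matrix (Fin n) (Fin m) ℝ) (b : Fin n → ℝ), r = affineRisk P x ε A W b}
      (affineRisk P x ε A (Sx * Aᵀ * (A * Sx * Aᵀ + Se)⁻¹)
        (μx - (Sx * Aᵀ * (A * Sx * Aᵀ + Se)⁻¹ * A).mulVec μx)) := by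
  set M := A * Sx * Aᵀ + Se
  set W₀ := Sx * Aᵀ * M⁻¹
  have hM : M.PosDef := posDef_mul_mul_transpose_add hSxPD.posSemidef hSePD A
  have hW₀ : W₀ * M = Sx * Aᵀ :=
    nonsing_inv_mul_cancel_right _ _ (isUnit_iff_isUnit_det _ |>.mp hM.isUnit)
  have hrisk : ∀ W b, affineRisk P x ε A W b = trace ((W - W₀) * M * (W - W₀)ᵀ)
      + trace (Sx - W₀ * A * Sx) + ∑ i, ((W * A - 1).mulVec μx + b) i ^ 2 := fun W b => by
    rw [affineRisk_eq_trace_errorCovariance_add hx hε hμx hSx hεmean hSe huncorr,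
      errorCovariance_eq_of_mul_eq (isHermitian_iff_isSymm.mp hSxPD.isHermitian)
        (isHermitian_iff_isSymm.mp hSePD.isHermitian) hW₀, trace_add]
  refine ⟨⟨_, _, rfl⟩, ?_⟩
  rintro _ ⟨W, b, rfl⟩
  have hgap : 0 ≤ trace ((W - W₀) * M * (W - W₀)ᵀ) := by
    simpa using (hM.posSemidef.mul_mul_conjTranspose_same (W - W₀)).trace_nonneg
  have hbias : 0 ≤ ∑ i, ((W * A - 1).mulVec μx + b) i ^ 2 :=
    Finset.sum_nonneg fun i _ => sq_nonneg _
  have hbias₀ : (W₀ * A - 1).mulVec μx + (μx - (W₀ * A).mulVec μx) = 0 := by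
    rw [sub_mulVec, one_mulVec]
    abel
  rw [hrisk, hrisk, sub_self, hbias₀]
  simp only [Matrix.zero_mul, trace_zero, Pi.zero_apply, zero_pow two_ne_zero,
    Finset.sum_const_zero]
  linarith

end Risk

/-- **Optimal noise-weighted Tikhonov regularization.** For `x†` with mean `μx`
and positive definite covariance `Sx`, `ε` with mean `0` and positive definite
covariance `Se`, uncorrelated: the choices `Ω = Se⁻¹`, any `R` with `RᵀR = Sx⁻¹`,
and `x₀ = μx` minimize the risk of the noise-weighted Tikhonov reconstruction
over all positive definite noise weights `O`, all `R'` with `AᵀO A + R'ᵀR'`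
invertible, and all offsets; moreover the resulting affine map equals the LMMSE
estimator, so its risk equals the minimal risk over all affine maps. -/
theorem optimal_noise_weighted_tikhonov {Ωs : Type*} [MeasurableSpace Ωs]
    (P : Measure Ωs) [IsProbabilityMeasure P] {n m : ℕ}
    (x : Ωs → Fin n → ℝ) (ε : Ωs → Fin m → ℝ)
    (hx : MemLp x 2 P) (hε : MemLp ε 2 P)
    (μx : Fin n → ℝ) (hμx : ∫ ω, x ω ∂P = μx)
    (Sx : Matrix (Fin n) (Fin n) ℝ) (hSxPD : Sx.PosDef)
    (hSx : ∀ i j, ∫ ω, (x ω i - μx i) * (x ω j - μx j) ∂P = Sx i j)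
    (hεmean : ∫ ω, ε ω ∂P = 0)
    (Se : Matrix (Fin m) (Fin m) ℝ) (hSePD : Se.PosDef)
    (hSe : ∀ i j, ∫ ω, ε ω i * ε ω j ∂P = Se i j)
    (huncorr : ∀ i j, ∫ ω, (x ω i - μx i) * ε ω j ∂P = 0)
    (A : Matrix (Fin m) (Fin n) ℝ)
    (R : Matrix (Fin n) (Fin n) ℝ) (hR : Rᵀ * R = Sx⁻¹) :
    (∀ (O : Matrix (Fin m) (Fin m) ℝ), O.PosDef →
      ∀ (R' : Matrix (Fin n) (Fin n) ℝ) (x₀' : Fin n → ℝ),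
        IsUnit (Aᵀ * O * A + R'ᵀ * R') →
        tikhonovRisk P x ε A Se⁻¹ R μx ≤ tikhonovRisk P x ε A O R' x₀') ∧
    (Aᵀ * Se⁻¹ * A + Rᵀ * R)⁻¹ * (Aᵀ * Se⁻¹) = Sx * Aᵀ * (A * Sx * Aᵀ + Se)⁻¹ ∧
    ((Aᵀ * Se⁻¹ * A + Rᵀ * R)⁻¹ * (Rᵀ * R)).mulVec μx =
      μx - (Sx * Aᵀ * (A * Sx * Aᵀ + Se)⁻¹ * A).mulVec μx ∧
    tikhonovRisk P x ε A Se⁻¹ R μx =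
      sInf {r | ∃ (W : Matrix (Fin n) (Fin m) ℝ) (b : Fin n → ℝ),
        r = affineRisk P x ε A W b} := by
  have hK : (Aᵀ * Se⁻¹ * A + Sx⁻¹).PosDef := by
    simpa using posDef_mul_mul_transpose_add hSePD.inv.posSemidef hSxPD.inv Aᵀ
  have hM := posDef_mul_mul_transpose_add hSxPD.posSemidef hSePD A
  have hgain := tikhonov_gain_eq hSxPD.det_pos.ne'.isUnit hSePD.det_pos.ne'.isUnit
    hK.det_pos.ne'.isUnit hM.det_pos.ne'.isUnit
  have hoffset := tikhonov_offset_eq hK.det_pos.ne'.isUnit hgain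
  have hleast := isLeast_affineRisk hx hε hμx hSxPD hSx hεmean hSePD hSe huncorr A
  have htikhonov : tikhonovRisk P x ε A Se⁻¹ R μx = affineRisk P x ε A
      (Sx * Aᵀ * (A * Sx * Aᵀ + Se)⁻¹) (μx - (Sx * Aᵀ * (A * Sx * Aᵀ + Se)⁻¹ * A).mulVec μx) := by
    rw [tikhonovRisk, hR, hgain, hoffset, sub_mulVec, one_mulVec]
  rw [htikhonov, hR, hoffset, sub_mulVec, one_mulVec]
  exact ⟨fun O _ R' x₀' _ => hleast.2 ⟨_, _, rfl⟩, hgain, rfl, hleast.csInf_eq.symm⟩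
end
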